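/- arXiv:1902.03085 — 5 statements merged into one kernel-verified Lean document; each statement's English description precedes it below -/
import Mathlib

section
/- Let V be a compact normal operator on a separable complex Hilbert space H, with orthonormal eigenbasis (f_j)_{j∈ℕ} and eigenvalue sequence (v_j)_{j∈ℕ}, so V = Σ_{j=1}^∞ v_j ⟨f_j, ·⟩f_j. Then for all t ∈ ℝ and all j, k ∈ ℕ, exp(−t Γ_V)(⟨f_k, ·⟩f_j) = exp(−(t/2)|v_j − v_k|²) · exp(i t · Im(v_j · conj(v_k))) · ⟨f_k, ·⟩f_j, where exp(−t Γ_V) is the exponential of the bounded linear operator −t Γ_V on the Banach algebra of bounded operators on H. -/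
/- Common definitions: trace class, trace norm, majorization, Lindblad
superoperators, C-numerical range, etc. -/

noncomputable section

open scoped InnerProductSpace
open ContinuousLinearMap Filter

variable {H : Type*} [NormedAddCommGroup H] [InnerProductSpace ℂ H] [CompleteSpace H]

/-- Left multiplication superoperator `X ↦ a * X` on bounded operators. -/
def lmulCLM (a : H →L[ℂ] H) : (H →L[ℂ] H) →L[ℂ] (H →L[ℂ] H) :=
  ContinuousLinearMap.mul ℂ (H →L[ℂ] H) a

/-- Right multiplication superoperator `X ↦ X * a` on bounded operators. -/
def rmulCLM (a : H →L[ℂ] H) : (H →L[ℂ] H) →L[ℂ] (H →L[ℂ] H) :=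
  (ContinuousLinearMap.mul ℂ (H →L[ℂ] H)).flip a

/-- The Lindblad noise superoperator `Γ_V : X ↦ ½(V†V X + X V†V) − V X V†`
as a bounded linear operator on bounded operators. -/
def GammaCLM (V : H →L[ℂ] H) : (H →L[ℂ] H) →L[ℂ] (H →L[ℂ] H) :=
  (1 / 2 : ℂ) • (lmulCLM (adjoint V * V) + rmulCLM (adjoint V * V)) -
    (lmulCLM V).comp (rmulCLM (adjoint V))

/-- `Γ_V` applied to a single operator `X`. -/
def Gamma (V X : H →L[ℂ] H) : H →L[ℂ] H :=
  (1 / 2 : ℂ) • (adjoint V * V * X + X * (adjoint V * V)) - V * X * adjoint V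

/-- The commutator superoperator `ad_K : X ↦ K X − X K`. -/
def adCLM (K : H →L[ℂ] H) : (H →L[ℂ] H) →L[ℂ] (H →L[ℂ] H) :=
  lmulCLM K - rmulCLM K

/-- The rank-one operator `x ↦ ⟪g, x⟫ • h`. -/
def rankOne (g h : H) : H →L[ℂ] H := (innerSL ℂ g).smulRight h

/-- `A` is trace class: for all orthonormal sequences `(e_n)`, `(f_n)` the family
`(⟪f n, A e n⟫)_n` is absolutely summable (standard characterization of the trace class). -/
def IsTraceClass (A : H →L[ℂ] H) : Prop :=
  ∀ e f : ℕ → H, Orthonormal ℂ e → Orthonormal ℂ f →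
    Summable fun n => ‖⟪f n, A (e n)⟫_ℂ‖

/-- The trace norm `‖A‖₁ = tr √(A†A)`, realized as the supremum of
`∑ₙ |⟪f n, A e n⟫|` over pairs of orthonormal sequences (standard characterization). -/
def traceNorm (A : H →L[ℂ] H) : ℝ :=
  ⨆ ef : {p : (ℕ → H) × (ℕ → H) // Orthonormal ℂ p.1 ∧ Orthonormal ℂ p.2},
    ∑' n, ‖⟪(ef : (ℕ → H) × (ℕ → H)).2 n, A ((ef : (ℕ → H) × (ℕ → H)).1 n)⟫_ℂ‖

/-- The trace of `A` computed along the orthonormal basis `b` (for a trace-class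
operator this is basis independent). -/
def traceAlong (b : HilbertBasis ℕ ℂ H) (A : H →L[ℂ] H) : ℂ :=
  ∑' n, ⟪b n, A (b n)⟫_ℂ

/-- The sum of the `k` largest entries of a nonnegative summable sequence. -/
def maxSum (x : ℕ → ℝ) (k : ℕ) : ℝ :=
  ⨆ s : {s : Finset ℕ // s.card = k}, ∑ i ∈ (s : Finset ℕ), x i

/-- Majorization `x ≺ y` of nonnegative summable sequences: for every `k` the sum of the
`k` largest entries of `x` is at most that of `y`, and the total sums agree. -/
def SeqMajorized (x y : ℕ → ℝ) : Prop :=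
  (∀ k : ℕ, maxSum x k ≤ maxSum y k) ∧ ∑' n, x n = ∑' n, y n

/-- `A = ∑ⱼ lam j ⟨e j, ·⟩ e j`, i.e. `A` is diagonal with respect to the orthonormal
basis `e` with (real) eigenvalue sequence `lam`. -/
def DiagonalizesAs (A : H →L[ℂ] H) (e : HilbertBasis ℕ ℂ H) (lam : ℕ → ℝ) : Prop :=
  ∀ x : H, A x = ∑' j, ((lam j : ℂ) * ⟪e j, x⟫_ℂ) • e j

/-- Majorization `ρ ≺ ω` of (positive trace-class) operators: their eigenvalue
sequences (with multiplicity, padded with zeros) are majorized. -/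
def OpMajorized (ρ ω : H →L[ℂ] H) : Prop :=
  ∃ (e f : HilbertBasis ℕ ℂ H) (lam mu : ℕ → ℝ),
    (∀ j, 0 ≤ lam j) ∧ (∀ j, 0 ≤ mu j) ∧
    DiagonalizesAs ρ e lam ∧ DiagonalizesAs ω f mu ∧ SeqMajorized lam mu

/-- A density operator: a positive trace-class operator of trace one. -/
def IsDensityOperator (ρ : H →L[ℂ] H) : Prop :=
  ρ.IsPositive ∧ IsTraceClass ρ ∧ ∀ b : HilbertBasis ℕ ℂ H, traceAlong b ρ = 1

/-- `K_C(T) = sup_U tr(C U† T U)` (the trace is real for selfadjoint `C`, `T`;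
we take the real part). -/
def KNum (b : HilbertBasis ℕ ℂ H) (C T : H →L[ℂ] H) : ℝ :=
  ⨆ U : unitary (H →L[ℂ] H),
    (traceAlong b (C * (star (U : H →L[ℂ] H) * T * (U : H →L[ℂ] H)))).re

/-- The C-numerical range `W_C(T) = { tr(C U† T U) | U unitary }`. -/
def CNumRange (b : HilbertBasis ℕ ℂ H) (C T : H →L[ℂ] H) : Set ℂ :=
  {z | ∃ U : H →L[ℂ] H, U ∈ unitary (H →L[ℂ] H) ∧
      z = traceAlong b (C * (star U * T * U))}

/-- The C-spectrum `P_C(T) = { ∑ⱼ c j · t (σ j) | σ a permutation of ℕ }`, in terms of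
the modified eigenvalue sequences `c` of `C` and `t` of `T`. -/
def CSpectrum (c t : ℕ → ℂ) : Set ℂ :=
  {z | ∃ σ : Equiv.Perm ℕ, z = ∑' j, c j * t (σ j)}

/-- Real version of the C-spectrum (for selfadjoint operators). -/
def CSpectrumR (c t : ℕ → ℝ) : Set ℝ :=
  {z | ∃ σ : Equiv.Perm ℕ, z = ∑' j, c j * t (σ j)}


/-- Auxiliary: exponential of an operator applied to an eigenvector. -/
lemma exp_apply_eq_of_eigen {E : Type*} [NormedAddCommGroup E] [NormedSpace ℂ E]
    [CompleteSpace E] (A : E →L[ℂ] E) (lam : ℂ) (x : E) (h : A x = lam • x) :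
    NormedSpace.exp A x = Complex.exp lam • x := by
  have hpow : ∀ n : ℕ, (A ^ n) x = lam ^ n • x := by
    intro n
    induction n with
    | zero => simp
    | succ n ih =>
      rw [pow_succ, ContinuousLinearMap.mul_apply, h, map_smul, ih, smul_smul, pow_succ,
        mul_comm]
  have hsum : Summable fun n : ℕ => ((n.factorial : ℂ))⁻¹ • A ^ n :=
    NormedSpace.expSeries_summable' A
  have hmap := (hsum.hasSum.mapL (ContinuousLinearMap.apply ℂ E x)).tsum_eq
  simp only [ContinuousLinearMap.apply_apply] at hmap
  have hcoef : Summable fun n : ℕ => ((n.factorial : ℂ))⁻¹ * lam ^ n := by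
    simpa [smul_eq_mul] using NormedSpace.expSeries_summable' (𝕂 := ℂ) lam
  calc NormedSpace.exp A x = (∑' n : ℕ, ((n.factorial : ℂ))⁻¹ • A ^ n) x := by
        rw [NormedSpace.exp_eq_tsum (𝕂 := ℂ)]
    _ = ∑' n : ℕ, (((n.factorial : ℂ))⁻¹ • A ^ n) x := hmap.symm
    _ = ∑' n : ℕ, (((n.factorial : ℂ))⁻¹ * lam ^ n) • x := by
        congr 1; funext n
        rw [ContinuousLinearMap.smul_apply, hpow, smul_smul]
    _ = (∑' n : ℕ, ((n.factorial : ℂ))⁻¹ * lam ^ n) • x := hcoef.tsum_smul_const x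
    _ = Complex.exp lam • x := by
        congr 1
        rw [Complex.exp_eq_exp_ℂ, NormedSpace.exp_eq_tsum (𝕂 := ℂ)]
        simp [smul_eq_mul]

/-- the noise semigroup acting on rank-one operators. For compact normal
`V` with eigenbasis `(f j)` and eigenvalues `(v j)`, for all `t ∈ ℝ` and `j, k`:
`exp(−t Γ_V)(⟨f k, ·⟩ f j) = exp(−(t/2)|v j − v k|²) exp(i t Im(v j conj(v k))) ⟨f k, ·⟩ f j`. -/
theorem stmt_5 (V : H →L[ℂ] H)
    (hVcpt : IsCompactOperator (⇑V)) (hVnormal : IsStarNormal V)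
    (f : HilbertBasis ℕ ℂ H) (v : ℕ → ℂ)
    (hV : ∀ x : H, V x = ∑' j, (v j * ⟪f j, x⟫_ℂ) • f j) :
    ∀ (t : ℝ) (j k : ℕ),
      NormedSpace.exp ((-(t : ℂ)) • GammaCLM V) (rankOne (f k) (f j)) =
        ((Real.exp (-(t / 2) * ‖v j - v k‖ ^ 2) : ℂ) *
            Complex.exp (Complex.I * (t : ℂ) * ((v j * starRingEnd ℂ (v k)).im : ℝ))) •
          rankOne (f k) (f j) := by
  intro t j k
  have horth := f.orthonormal
  have hVf : ∀ i : ℕ, V (f i) = v i • f i := by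
    intro i
    rw [hV (f i), tsum_eq_single i]
    · rw [orthonormal_iff_ite.mp horth]; simp
    · intro b hb
      rw [orthonormal_iff_ite.mp horth]
      simp [hb]
  have hVadj : ∀ i : ℕ, ContinuousLinearMap.adjoint V (f i) = (starRingEnd ℂ (v i)) • f i := by
    intro i
    apply f.repr.injective
    apply lp.ext
    funext n
    rw [f.repr_apply_apply, f.repr_apply_apply, ContinuousLinearMap.adjoint_inner_right,
      hVf n, inner_smul_left, inner_smul_right, orthonormal_iff_ite.mp horth]
    by_cases h : n = i
    · subst h; rfl
    · simp [h]
  set P : H →L[ℂ] H := rankOne (f k) (f j) with hP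
  have hPapp : ∀ x : H, P x = ⟪f k, x⟫_ℂ • f j := by
    intro x; rfl
  set lam : ℂ := (1 / 2 : ℂ) * (starRingEnd ℂ (v j) * v j + starRingEnd ℂ (v k) * v k)
      - v j * starRingEnd ℂ (v k) with hlam
  have hGamma : GammaCLM V P = lam • P := by
    ext x
    simp only [GammaCLM, lmulCLM, rmulCLM, ContinuousLinearMap.sub_apply,
      ContinuousLinearMap.smul_apply, ContinuousLinearMap.add_apply,
      ContinuousLinearMap.coe_comp', Function.comp_apply,
      ContinuousLinearMap.mul_apply', ContinuousLinearMap.flip_apply]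
    have h1 : (ContinuousLinearMap.adjoint V * V * P) x
        = (starRingEnd ℂ (v j) * v j * ⟪f k, x⟫_ℂ) • f j := by
      simp only [ContinuousLinearMap.mul_apply, hPapp, map_smul, hVf, hVadj, smul_smul]
      congr 1
      ring
    have h2 : (P * (ContinuousLinearMap.adjoint V * V)) x
        = (starRingEnd ℂ (v k) * v k * ⟪f k, x⟫_ℂ) • f j := by
      rw [ContinuousLinearMap.mul_apply, hPapp, ContinuousLinearMap.mul_apply,
        ContinuousLinearMap.adjoint_inner_right, hVf, inner_smul_left,
        ← ContinuousLinearMap.adjoint_inner_left, hVadj, inner_smul_left]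
      congr 1
      simp only [Complex.conj_conj]
      ring
    have h3 : (V * (P * ContinuousLinearMap.adjoint V)) x
        = (v j * starRingEnd ℂ (v k) * ⟪f k, x⟫_ℂ) • f j := by
      rw [ContinuousLinearMap.mul_apply, ContinuousLinearMap.mul_apply, hPapp,
        ContinuousLinearMap.adjoint_inner_right, hVf, inner_smul_left, map_smul, hVf,
        smul_smul]
      congr 1
      ring
    rw [h1, h2, h3, hPapp, hlam]
    simp only [smul_smul, smul_add, ← add_smul, ← sub_smul]
    congr 1
    ring
  have heig : ((-(t : ℂ)) • GammaCLM V) P = ((-(t : ℂ)) * lam) • P := by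
    rw [ContinuousLinearMap.smul_apply, hGamma, smul_smul]
  rw [exp_apply_eq_of_eigen _ _ _ heig]
  congr 1
  rw [Complex.ofReal_exp, ← Complex.exp_add]
  congr 1
  have hnorm : ‖v j - v k‖ ^ 2
      = (v j).re ^ 2 + (v j).im ^ 2 + (v k).re ^ 2 + (v k).im ^ 2
        - 2 * ((v j).re * (v k).re + (v j).im * (v k).im) := by
    rw [Complex.sq_norm]
    simp only [ Complex.normSq_sub, Complex.normSq_apply, Complex.mul_re,
      Complex.conj_re, Complex.conj_im, Complex.sub_re, Complex.sub_im]
    ring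
  rw [hlam]
  apply Complex.ext <;>
    simp only [hnorm, Complex.mul_re, Complex.mul_im, Complex.conj_re, Complex.conj_im,
      Complex.add_re, Complex.add_im, Complex.sub_re, Complex.sub_im, Complex.neg_re,
      Complex.neg_im, Complex.I_re, Complex.I_im, Complex.ofReal_re, Complex.ofReal_im,
      Complex.div_ofNat_re, Complex.div_ofNat_im, Complex.one_re, Complex.one_im] <;> ring
end
end

section
/- Let V be a compact normal operator on a separable complex Hilbert space H, with orthonormal eigenbasis (f_j)_{j∈ℕ} and eigenvalue sequence (v_j)_{j∈ℕ}, so V = Σ_{j=1}^∞ v_j ⟨f_j, ·⟩f_j. Then for every bounded operator X on H, all t ≥ 0 and all j, k ∈ ℕ, ⟨f_j, exp(−t Γ_V)(X) f_k⟩ = exp(−(t/2)|v_j − v_k|²) · exp(i t · Im(v_j · conj(v_k))) · ⟨f_j, X f_k⟩; in particular |⟨f_j, exp(−t Γ_V)(X) f_k⟩| = exp(−(t/2)|v_j − v_k|²) · |⟨f_j, X f_k⟩| ≤ |⟨f_j, X f_k⟩|. -/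
/- Common definitions: trace class, trace norm, majorization, Lindblad
superoperators, C-numerical range, etc. -/

noncomputable section

open scoped InnerProductSpace
open ContinuousLinearMap Filter

variable {H : Type*} [NormedAddCommGroup H] [InnerProductSpace ℂ H] [CompleteSpace H]

open scoped InnerProductSpace
open ContinuousLinearMap

/-- If `φ ∘ A = c • φ` then `φ ∘ exp A = exp c • φ`. -/
lemma phi_exp_eig {E : Type*} [NormedAddCommGroup E] [NormedSpace ℂ E] [CompleteSpace E]
    (A : E →L[ℂ] E) (φ : E →L[ℂ] ℂ) (c : ℂ) (h : ∀ x, φ (A x) = c * φ x) (x : E) :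
    φ (NormedSpace.exp A x) = Complex.exp c * φ x := by
  have hpow : ∀ n : ℕ, ∀ y : E, φ ((A ^ n) y) = c ^ n * φ y := by
    intro n
    induction n with
    | zero => intro y; simp
    | succ n ih =>
      intro y
      rw [pow_succ, ContinuousLinearMap.mul_apply, ih, h, pow_succ]
      ring
  have hs : Summable fun n : ℕ => ((n.factorial : ℂ))⁻¹ • A ^ n :=
    NormedSpace.expSeries_summable' A
  have key : (NormedSpace.exp A) x = ∑' n : ℕ, ((n.factorial : ℂ))⁻¹ • (A ^ n) x := by
    rw [NormedSpace.exp_eq_tsum ℂ]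
    have := (ContinuousLinearMap.apply ℂ E x).map_tsum hs
    simpa using this
  have hs2 : Summable fun n : ℕ => ((n.factorial : ℂ))⁻¹ • (A ^ n) x := by
    have := hs.map (ContinuousLinearMap.apply ℂ E x) (ContinuousLinearMap.apply ℂ E x).continuous
    exact this
  rw [key, φ.map_tsum hs2]
  have : ∀ n : ℕ, φ (((n.factorial : ℂ))⁻¹ • (A ^ n) x) =
      ((n.factorial : ℂ))⁻¹ • c ^ n * φ x := by
    intro n
    rw [φ.map_smul, hpow n x, smul_eq_mul, smul_eq_mul]
    ring
  rw [tsum_congr this, tsum_mul_right, Complex.exp_eq_exp_ℂ, NormedSpace.exp_eq_tsum ℂ]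

/-- Eigenvector of a normal operator is eigenvector of its adjoint. -/
lemma adjoint_eig {H : Type*} [NormedAddCommGroup H] [InnerProductSpace ℂ H] [CompleteSpace H]
    (A : H →L[ℂ] H) (hA : IsStarNormal A) (x : H) (c : ℂ) (hx : A x = c • x) :
    ContinuousLinearMap.adjoint A x = (starRingEnd ℂ c) • x := by
  have h0 : A * ContinuousLinearMap.adjoint A = ContinuousLinearMap.adjoint A * A := by
    have := hA.star_comm_self
    rw [ContinuousLinearMap.star_eq_adjoint] at this
    exact this.symm
  set w := ContinuousLinearMap.adjoint A x - (starRingEnd ℂ c) • x with hw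
  have e1 : ⟪ContinuousLinearMap.adjoint A x, ContinuousLinearMap.adjoint A x⟫_ℂ
      = c * (starRingEnd ℂ c) * ⟪x, x⟫_ℂ := by
    calc ⟪ContinuousLinearMap.adjoint A x, ContinuousLinearMap.adjoint A x⟫_ℂ
        = ⟪x, A (ContinuousLinearMap.adjoint A x)⟫_ℂ :=
          ContinuousLinearMap.adjoint_inner_left A (ContinuousLinearMap.adjoint A x) x
      _ = ⟪x, (A * ContinuousLinearMap.adjoint A) x⟫_ℂ := rfl
      _ = ⟪x, (ContinuousLinearMap.adjoint A * A) x⟫_ℂ := by rw [h0]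
      _ = ⟪x, ContinuousLinearMap.adjoint A (A x)⟫_ℂ := rfl
      _ = ⟪A x, A x⟫_ℂ := ContinuousLinearMap.adjoint_inner_right A x (A x)
      _ = c * (starRingEnd ℂ c) * ⟪x, x⟫_ℂ := by
          rw [hx, inner_smul_left, inner_smul_right]; ring
  have e2 : ⟪x, ContinuousLinearMap.adjoint A x⟫_ℂ = (starRingEnd ℂ c) * ⟪x, x⟫_ℂ := by
    rw [ContinuousLinearMap.adjoint_inner_right, hx, inner_smul_left]
  have e3 : ⟪ContinuousLinearMap.adjoint A x, x⟫_ℂ = c * ⟪x, x⟫_ℂ := by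
    rw [ContinuousLinearMap.adjoint_inner_left, hx, inner_smul_right]
  have h2 : ⟪w, w⟫_ℂ = 0 := by
    rw [hw, inner_sub_sub_self]
    simp only [inner_smul_left, inner_smul_right, Complex.conj_conj, e1, e2, e3]
    ring
  have h3 : w = 0 := inner_self_eq_zero.mp h2
  have := sub_eq_zero.mp h3
  exact this

/-- matrix elements of the noise semigroup. For compact normal `V` with
eigenbasis `(f j)` and eigenvalues `(v j)`, for every bounded `X`, `t ≥ 0` and `j, k`:
`⟪f j, exp(−t Γ_V)(X) f k⟫ = exp(−(t/2)|v j − v k|²) exp(i t Im(v j conj(v k))) ⟪f j, X f k⟫`,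
and in particular
`|⟪f j, exp(−t Γ_V)(X) f k⟫| = exp(−(t/2)|v j − v k|²) |⟪f j, X f k⟫| ≤ |⟪f j, X f k⟫|`. -/
theorem stmt_6 (V : H →L[ℂ] H)
    (hVcpt : IsCompactOperator (⇑V)) (hVnormal : IsStarNormal V)
    (f : HilbertBasis ℕ ℂ H) (v : ℕ → ℂ)
    (hV : ∀ x : H, V x = ∑' j, (v j * ⟪f j, x⟫_ℂ) • f j) :
    ∀ (X : H →L[ℂ] H) (t : ℝ), 0 ≤ t → ∀ j k : ℕ,
      (⟪f j, (NormedSpace.exp ((-(t : ℂ)) • GammaCLM V) X) (f k)⟫_ℂ =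
        (Real.exp (-(t / 2) * ‖v j - v k‖ ^ 2) : ℂ) *
          Complex.exp (Complex.I * (t : ℂ) * ((v j * starRingEnd ℂ (v k)).im : ℝ)) *
          ⟪f j, X (f k)⟫_ℂ) ∧
      (‖⟪f j, (NormedSpace.exp ((-(t : ℂ)) • GammaCLM V) X) (f k)⟫_ℂ‖ =
        Real.exp (-(t / 2) * ‖v j - v k‖ ^ 2) * ‖⟪f j, X (f k)⟫_ℂ‖) ∧
      ‖⟪f j, (NormedSpace.exp ((-(t : ℂ)) • GammaCLM V) X) (f k)⟫_ℂ‖ ≤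
        ‖⟪f j, X (f k)⟫_ℂ‖ := by
  intro X t ht j k
  -- eigenvector facts
  have hVf : ∀ i, V (f i) = v i • f i := by
    intro i
    rw [hV (f i)]
    have heq : (fun m => (v m * ⟪f m, f i⟫_ℂ) • f m)
        = fun m => if m = i then v i • f i else 0 := by
      funext m
      rw [orthonormal_iff_ite.mp f.orthonormal m i]
      rcases eq_or_ne m i with h | h
      · simp [h]
      · simp [h]
    rw [heq, tsum_ite_eq]
  have hVadjf : ∀ i, ContinuousLinearMap.adjoint V (f i) = (starRingEnd ℂ (v i)) • f i :=
    fun i => adjoint_eig V hVnormal (f i) (v i) (hVf i)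
  -- the matrix-element functional
  set φ : (H →L[ℂ] H) →L[ℂ] ℂ :=
    (innerSL ℂ (f j)).comp ((ContinuousLinearMap.apply ℂ H) (f k)) with hφ
  have hφapp : ∀ Y : H →L[ℂ] H, φ Y = ⟪f j, Y (f k)⟫_ℂ := fun Y => rfl
  have hL1 : ∀ y : H, ⟪f j, V y⟫_ℂ = v j * ⟪f j, y⟫_ℂ := by
    intro y
    conv_lhs => rw [← ContinuousLinearMap.adjoint_adjoint V]
    rw [ContinuousLinearMap.adjoint_inner_right, hVadjf j, inner_smul_left, Complex.conj_conj]
  have hL2 : ∀ y : H, ⟪f j, ContinuousLinearMap.adjoint V y⟫_ℂ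
      = starRingEnd ℂ (v j) * ⟪f j, y⟫_ℂ := by
    intro y
    rw [ContinuousLinearMap.adjoint_inner_right, hVf j, inner_smul_left]
  set c₀ : ℂ := (1 / 2 : ℂ) * (starRingEnd ℂ (v j) * v j + v k * starRingEnd ℂ (v k))
      - v j * starRingEnd ℂ (v k) with hc₀
  have hGamma : ∀ Y : H →L[ℂ] H, φ (GammaCLM V Y) = c₀ * φ Y := by
    intro Y
    have hexpand : GammaCLM V Y = (1 / 2 : ℂ) •
        ((ContinuousLinearMap.adjoint V * V) * Y + Y * (ContinuousLinearMap.adjoint V * V))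
        - V * (Y * ContinuousLinearMap.adjoint V) := rfl
    rw [hφapp, hφapp, hexpand]
    rw [ContinuousLinearMap.sub_apply, ContinuousLinearMap.smul_apply,
      ContinuousLinearMap.add_apply]
    rw [inner_sub_right, inner_smul_right, inner_add_right]
    have t1 : ⟪f j, ((ContinuousLinearMap.adjoint V * V) * Y) (f k)⟫_ℂ
        = starRingEnd ℂ (v j) * v j * ⟪f j, Y (f k)⟫_ℂ := by
      show ⟪f j, ContinuousLinearMap.adjoint V (V (Y (f k)))⟫_ℂ = _
      rw [hL2, hL1]; ring
    have t2 : ⟪f j, (Y * (ContinuousLinearMap.adjoint V * V)) (f k)⟫_ℂ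
        = v k * starRingEnd ℂ (v k) * ⟪f j, Y (f k)⟫_ℂ := by
      show ⟪f j, Y (ContinuousLinearMap.adjoint V (V (f k)))⟫_ℂ = _
      rw [hVf k, map_smul, hVadjf k, map_smul, map_smul, inner_smul_right, inner_smul_right]
      ring
    have t3 : ⟪f j, (V * (Y * ContinuousLinearMap.adjoint V)) (f k)⟫_ℂ
        = v j * starRingEnd ℂ (v k) * ⟪f j, Y (f k)⟫_ℂ := by
      show ⟪f j, V (Y (ContinuousLinearMap.adjoint V (f k)))⟫_ℂ = _
      rw [hL1, hVadjf k, map_smul, inner_smul_right]; ring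
    rw [t1, t2, t3, hc₀]; ring
  have hA : ∀ Y : H →L[ℂ] H, φ (((-(t : ℂ)) • GammaCLM V) Y) = (-(t : ℂ) * c₀) * φ Y := by
    intro Y
    rw [ContinuousLinearMap.smul_apply, map_smul, hGamma, smul_eq_mul]; ring
  have hmain : φ (NormedSpace.exp ((-(t : ℂ)) • GammaCLM V) X)
      = Complex.exp (-(t : ℂ) * c₀) * φ X :=
    phi_exp_eig ((-(t : ℂ)) • GammaCLM V) φ (-(t : ℂ) * c₀) hA X
  -- scalar identity
  have hnorm : (‖v j - v k‖ ^ 2 : ℝ) = (v j - v k).re ^ 2 + (v j - v k).im ^ 2 := by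
    rw [Complex.sq_norm, Complex.normSq_apply]; ring
  have harg : (-(t : ℂ)) * c₀ = ((-(t / 2) * ‖v j - v k‖ ^ 2 : ℝ) : ℂ)
      + Complex.I * (t : ℂ) * ((v j * starRingEnd ℂ (v k)).im : ℝ) := by
    have h2 : (-(t / 2) * ‖v j - v k‖ ^ 2 : ℝ)
        = -(t / 2) * ((v j).re - (v k).re) ^ 2 - (t / 2) * ((v j).im - (v k).im) ^ 2 := by
      rw [hnorm]; simp only [Complex.sub_re, Complex.sub_im]; ring
    rw [hc₀, h2]
    apply Complex.ext <;>
      simp only [Complex.neg_re, Complex.neg_im, Complex.mul_re, Complex.mul_im,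
        Complex.sub_re, Complex.sub_im, Complex.add_re, Complex.add_im,
        Complex.ofReal_re, Complex.ofReal_im, Complex.I_re, Complex.I_im,
        Complex.one_re, Complex.one_im, Complex.re_ofNat, Complex.im_ofNat, Complex.div_re, Complex.div_im,
        Complex.conj_re, Complex.conj_im, Complex.ofReal_mul, Complex.ofReal_sub,
        Complex.ofReal_neg, ← Complex.ofReal_pow, Complex.normSq_apply] <;>
      ring_nf <;>
      field_simp <;>
      ring
  have hexp : Complex.exp (-(t : ℂ) * c₀)
      = (Real.exp (-(t / 2) * ‖v j - v k‖ ^ 2) : ℂ) *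
        Complex.exp (Complex.I * (t : ℂ) * ((v j * starRingEnd ℂ (v k)).im : ℝ)) := by
    rw [harg, Complex.exp_add, Complex.ofReal_exp]
  have heq : ⟪f j, (NormedSpace.exp ((-(t : ℂ)) • GammaCLM V) X) (f k)⟫_ℂ =
      (Real.exp (-(t / 2) * ‖v j - v k‖ ^ 2) : ℂ) *
        Complex.exp (Complex.I * (t : ℂ) * ((v j * starRingEnd ℂ (v k)).im : ℝ)) *
        ⟪f j, X (f k)⟫_ℂ := by
    rw [← hφapp, hmain, hexp, hφapp]
  have hnormexp :
      ‖Complex.exp (Complex.I * (t : ℂ) * ((v j * starRingEnd ℂ (v k)).im : ℝ))‖ = 1 := by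
    rw [Complex.norm_exp]
    have hre : (Complex.I * (t : ℂ) * ((v j * starRingEnd ℂ (v k)).im : ℝ)).re = 0 := by
      simp [Complex.mul_re]
    rw [hre, Real.exp_zero]
  have hnormeq : ‖⟪f j, (NormedSpace.exp ((-(t : ℂ)) • GammaCLM V) X) (f k)⟫_ℂ‖ =
      Real.exp (-(t / 2) * ‖v j - v k‖ ^ 2) * ‖⟪f j, X (f k)⟫_ℂ‖ := by
    rw [heq, norm_mul, norm_mul, hnormexp, mul_one, Complex.norm_real, Real.norm_eq_abs,
      abs_of_nonneg (Real.exp_pos _).le]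
  refine ⟨heq, hnormeq, ?_⟩
  rw [hnormeq]
  have h1 : Real.exp (-(t / 2) * ‖v j - v k‖ ^ 2) ≤ 1 := by
    apply Real.exp_le_one_iff.mpr
    have : (0:ℝ) ≤ t / 2 * ‖v j - v k‖ ^ 2 := by positivity
    linarith
  calc Real.exp (-(t / 2) * ‖v j - v k‖ ^ 2) * ‖⟪f j, X (f k)⟫_ℂ‖
      ≤ 1 * ‖⟪f j, X (f k)⟫_ℂ‖ := mul_le_mul_of_nonneg_right h1 (norm_nonneg _)
    _ = ‖⟪f j, X (f k)⟫_ℂ‖ := one_mul _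
end
end

section
/- Let V be a compact normal operator on a separable complex Hilbert space H, with orthonormal eigenbasis (f_j)_{j∈ℕ} and eigenvalue sequence (v_j)_{j∈ℕ}, so V = Σ_{j=1}^∞ v_j ⟨f_j, ·⟩f_j. Then for every bounded operator X on H and all j, k ∈ ℕ, the limit as t → ∞ of ⟨f_j, exp(−t Γ_V)(X) f_k⟩ equals 0 if v_j ≠ v_k, and equals ⟨f_j, X f_k⟩ if v_j = v_k. -/
/- Common definitions: trace class, trace norm, majorization, Lindblad
superoperators, C-numerical range, etc. -/

noncomputable section

open scoped InnerProductSpace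
open ContinuousLinearMap Filter

variable {H : Type*} [NormedAddCommGroup H] [InnerProductSpace ℂ H] [CompleteSpace H]

/-- long-time limit of the noise semigroup's matrix elements. For compact
normal `V` with eigenbasis `(f j)` and eigenvalues `(v j)`, for every bounded `X` and
all `j, k`: `⟪f j, exp(−t Γ_V)(X) f k⟫ → 0` as `t → ∞` if `v j ≠ v k`, and
`⟪f j, exp(−t Γ_V)(X) f k⟫ → ⟪f j, X f k⟫` if `v j = v k`. -/
theorem stmt_7 (V : H →L[ℂ] H)
    (hVcpt : IsCompactOperator (⇑V)) (hVnormal : IsStarNormal V)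
    (f : HilbertBasis ℕ ℂ H) (v : ℕ → ℂ)
    (hV : ∀ x : H, V x = ∑' j, (v j * ⟪f j, x⟫_ℂ) • f j) :
    ∀ (X : H →L[ℂ] H) (j k : ℕ),
      (v j ≠ v k →
        Tendsto (fun t : ℝ => ⟪f j, (NormedSpace.exp ((-(t : ℂ)) • GammaCLM V) X) (f k)⟫_ℂ)
          atTop (nhds 0)) ∧
      (v j = v k →
        Tendsto (fun t : ℝ => ⟪f j, (NormedSpace.exp ((-(t : ℂ)) • GammaCLM V) X) (f k)⟫_ℂ)
          atTop (nhds ⟪f j, X (f k)⟫_ℂ)) := by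
  classical
  intro X j k
  have hite : ∀ i l : ℕ, ⟪f i, f l⟫_ℂ = if i = l then 1 else 0 :=
    orthonormal_iff_ite.mp f.orthonormal
  have heig : ∀ l, V (f l) = v l • f l := by
    intro l
    rw [hV]
    rw [tsum_eq_single l]
    · simp [hite, f.orthonormal.1 l]
    · intro i hi
      simp [hite, hi]
  have hext : ∀ x y : H, (∀ i, ⟪f i, x⟫_ℂ = ⟪f i, y⟫_ℂ) → x = y := by
    intro x y h
    apply f.repr.injective
    ext i
    rw [f.repr_apply_apply, f.repr_apply_apply, h]
  have hadj : ∀ l, adjoint V (f l) = (starRingEnd ℂ) (v l) • f l := by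
    intro l
    apply hext
    intro i
    rw [adjoint_inner_right, heig, inner_smul_left, inner_smul_right]
    by_cases h : i = l <;> simp [hite, h]
  have h1 : ∀ y : H, ⟪f j, V y⟫_ℂ = v j * ⟪f j, y⟫_ℂ := by
    intro y
    rw [← adjoint_inner_left, hadj, inner_smul_left]
    simp
  have h2 : ∀ y : H, ⟪f j, adjoint V y⟫_ℂ = (starRingEnd ℂ) (v j) * ⟪f j, y⟫_ℂ := by
    intro y
    rw [adjoint_inner_right, heig, inner_smul_left]
  set γ : ℂ := (1 / 2 : ℂ) * ((starRingEnd ℂ) (v j) * v j + v k * (starRingEnd ℂ) (v k))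
      - (starRingEnd ℂ) (v k) * v j with hγ
  have key : ∀ Y : H →L[ℂ] H, ⟪f j, (GammaCLM V Y) (f k)⟫_ℂ = γ * ⟪f j, Y (f k)⟫_ℂ := by
    intro Y
    have e1 : GammaCLM V Y (f k)
        = (1 / 2 : ℂ) • (adjoint V (V (Y (f k))) + Y (adjoint V (V (f k))))
          - V (Y (adjoint V (f k))) := by
      simp [GammaCLM, lmulCLM, rmulCLM, ContinuousLinearMap.mul_apply]
    rw [e1]
    simp only [heig, hadj, map_smul, inner_sub_right, inner_add_right, inner_smul_right,
      h1, h2, smul_eq_mul]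
    ring
  have hpow : ∀ (c : ℂ) (n : ℕ) (Y : H →L[ℂ] H),
      ⟪f j, (((c • GammaCLM V) ^ n) Y) (f k)⟫_ℂ = (c * γ) ^ n * ⟪f j, Y (f k)⟫_ℂ := by
    intro c n
    induction n with
    | zero => intro Y; simp
    | succ n ih =>
      intro Y
      rw [pow_succ, ContinuousLinearMap.mul_apply, ih, ContinuousLinearMap.smul_apply,
        ContinuousLinearMap.smul_apply, inner_smul_right, key, pow_succ]
      ring
  have expand : ∀ t : ℝ,
      ⟪f j, (NormedSpace.exp ((-(t : ℂ)) • GammaCLM V) X) (f k)⟫_ℂ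
        = Complex.exp ((-(t : ℂ)) * γ) * ⟪f j, X (f k)⟫_ℂ := by
    intro t
    set A : (H →L[ℂ] H) →L[ℂ] (H →L[ℂ] H) := (-(t : ℂ)) • GammaCLM V with hA
    set L : ((H →L[ℂ] H) →L[ℂ] (H →L[ℂ] H)) →L[ℂ] ℂ :=
      ((innerSL ℂ (f j)).comp (ContinuousLinearMap.apply ℂ H (f k))).comp
        (ContinuousLinearMap.apply ℂ (H →L[ℂ] H) X) with hL
    have hLapp : ∀ B : (H →L[ℂ] H) →L[ℂ] (H →L[ℂ] H), L B = ⟪f j, (B X) (f k)⟫_ℂ := fun B => rfl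
    have hsum : Summable (fun n : ℕ => ((n.factorial : ℂ))⁻¹ • A ^ n) :=
      NormedSpace.expSeries_summable' A
    have step1 : ⟪f j, (NormedSpace.exp A X) (f k)⟫_ℂ
        = ∑' n : ℕ, L (((n.factorial : ℂ))⁻¹ • A ^ n) := by
      rw [← hLapp, NormedSpace.exp_eq_tsum ℂ]
      exact L.map_tsum hsum
    rw [step1]
    have step2 : ∀ n : ℕ, L (((n.factorial : ℂ))⁻¹ • A ^ n)
        = (((n.factorial : ℂ))⁻¹ • ((-(t : ℂ)) * γ) ^ n) * ⟪f j, X (f k)⟫_ℂ := by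
      intro n
      rw [map_smul, hLapp, hA, hpow]
      simp [mul_assoc]
    rw [tsum_congr step2, tsum_mul_right]
    congr 1
    rw [Complex.exp_eq_exp_ℂ, NormedSpace.exp_eq_tsum ℂ]
  constructor
  · intro hne
    have hre : 0 < γ.re := by
      have hsub : v j - v k ≠ 0 := sub_ne_zero.mpr hne
      have : γ.re = Complex.normSq (v j - v k) / 2 := by
        simp [hγ, Complex.normSq_apply, Complex.mul_re, Complex.add_re, Complex.sub_re,
          Complex.conj_re, Complex.conj_im, Complex.mul_im, Complex.add_im, Complex.sub_im]
        ring
      rw [this]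
      have := Complex.normSq_pos.mpr hsub
      linarith
    have hnorm : ∀ t : ℝ, ‖⟪f j, (NormedSpace.exp ((-(t : ℂ)) • GammaCLM V) X) (f k)⟫_ℂ‖
        = Real.exp (-(t * γ.re)) * ‖⟪f j, X (f k)⟫_ℂ‖ := by
      intro t
      rw [expand, norm_mul, Complex.norm_exp]
      congr 2
      simp [Complex.mul_re]
    have h0 : Tendsto (fun t : ℝ => Real.exp (-(t * γ.re))) atTop (nhds 0) :=
      Real.tendsto_exp_neg_atTop_nhds_zero.comp (tendsto_id.atTop_mul_const hre)
    have h1' : Tendsto (fun t : ℝ => Real.exp (-(t * γ.re)) * ‖⟪f j, X (f k)⟫_ℂ‖)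
        atTop (nhds 0) := by
      simpa using h0.mul_const ‖⟪f j, X (f k)⟫_ℂ‖
    exact squeeze_zero_norm (fun t => le_of_eq (hnorm t)) h1'
  · intro heq
    have hγ0 : γ = 0 := by
      rw [hγ, heq]
      ring
    simp only [expand, hγ0, mul_zero, Complex.exp_zero, one_mul]
    exact tendsto_const_nhds
end
end

section
/- Let H be a separable complex Hilbert space and let R be a subset of the unitary group U(H) whose closure in the strong operator topology (relative to U(H)) is all of U(H). Let ρ be a density operator on H and U ∈ U(H). Then for every ε > 0 there exists Ũ ∈ R such that ‖U ρ U† − Ũ ρ Ũ†‖₁ < ε. -/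
/- Common definitions: trace class, trace norm, majorization, Lindblad
superoperators, C-numerical range, etc. -/

noncomputable section

open scoped InnerProductSpace
open ContinuousLinearMap Filter

variable {H : Type*} [NormedAddCommGroup H] [InnerProductSpace ℂ H] [CompleteSpace H]

section Aux

lemma tsum_cs' {a b : ℕ → ℝ} (ha : ∀ n, 0 ≤ a n) (hb : ∀ n, 0 ≤ b n)
    (hsa : Summable (fun n => a n ^ 2)) (hsb : Summable (fun n => b n ^ 2)) :
    ∑' n, a n * b n ≤ Real.sqrt (∑' n, a n ^ 2) * Real.sqrt (∑' n, b n ^ 2) := by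
  apply tsum_le_of_sum_le' (by positivity)
  intro u
  have h1 := Finset.sum_mul_sq_le_sq_mul_sq u a b
  have hu : (0:ℝ) ≤ ∑ i ∈ u, a i * b i := Finset.sum_nonneg fun i _ => mul_nonneg (ha i) (hb i)
  have h2 : ∑ i ∈ u, a i * b i ≤ Real.sqrt ((∑ i ∈ u, a i ^ 2) * (∑ i ∈ u, b i ^ 2)) :=
    (Real.le_sqrt hu (by positivity)).2 h1
  refine h2.trans ?_
  rw [Real.sqrt_mul (by positivity)]
  gcongr
  · exact Summable.sum_le_tsum u (fun i _ => by positivity) hsa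
  · exact Summable.sum_le_tsum u (fun i _ => by positivity) hsb

lemma summable_mul_of_sq' {a b : ℕ → ℝ}
    (hsa : Summable (fun n => a n ^ 2)) (hsb : Summable (fun n => b n ^ 2)) :
    Summable (fun n => a n * b n) := by
  have : ∀ n, ‖a n * b n‖ ≤ (a n ^ 2 + b n ^ 2) / 2 := by
    intro n
    rw [norm_mul, Real.norm_eq_abs, Real.norm_eq_abs]
    nlinarith [sq_nonneg (|a n| - |b n|), sq_abs (a n), sq_abs (b n)]
  exact Summable.of_norm_bounded ((hsa.add hsb).div_const 2) this

variable {H : Type*} [NormedAddCommGroup H] [InnerProductSpace ℂ H] [CompleteSpace H]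

lemma parseval' (b : HilbertBasis ℕ ℂ H) (x : H) :
    HasSum (fun m => ‖⟪b m, x⟫_ℂ‖ ^ 2) (‖x‖ ^ 2) := by
  have h := b.hasSum_inner_mul_inner x x
  have h2 := h.mapL Complex.reCLM
  convert h2 using 2 with m
  · rw [← inner_conj_symm x (b m)]
    simp only [Complex.reCLM_apply, Complex.conj_mul']
    norm_cast
  · exact (inner_self_eq_norm_sq (𝕜 := ℂ) x).symm

lemma hs_bound' (T : H →L[ℂ] H) (b : HilbertBasis ℕ ℂ H) {f : ℕ → H}
    (hf : Orthonormal ℂ f) (hsum : Summable fun m => ‖T (b m)‖ ^ 2) :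
    Summable (fun n => ‖adjoint T (f n)‖ ^ 2) ∧
      ∑' n, ‖adjoint T (f n)‖ ^ 2 ≤ ∑' m, ‖T (b m)‖ ^ 2 := by
  have key : ∀ u : Finset ℕ, ∑ n ∈ u, ‖adjoint T (f n)‖ ^ 2 ≤ ∑' m, ‖T (b m)‖ ^ 2 := by
    intro u
    have h1 : ∀ n, ‖adjoint T (f n)‖ ^ 2 = ∑' m, ‖⟪f n, T (b m)⟫_ℂ‖ ^ 2 := by
      intro n
      rw [← (parseval' b (adjoint T (f n))).tsum_eq]
      congr 1; ext m
      rw [adjoint_inner_right, norm_inner_symm]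
    have hsm : ∀ n, Summable (fun m => ‖⟪f n, T (b m)⟫_ℂ‖ ^ 2) := by
      intro n
      have := (parseval' b (adjoint T (f n))).summable
      convert this using 2 with m
      rw [adjoint_inner_right, norm_inner_symm]
    calc ∑ n ∈ u, ‖adjoint T (f n)‖ ^ 2
        = ∑ n ∈ u, ∑' m, ‖⟪f n, T (b m)⟫_ℂ‖ ^ 2 := by simp_rw [h1]
      _ = ∑' m, ∑ n ∈ u, ‖⟪f n, T (b m)⟫_ℂ‖ ^ 2 := (Summable.tsum_finsetSum (fun n _ => hsm n)).symm
      _ ≤ ∑' m, ‖T (b m)‖ ^ 2 := by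
          refine Summable.tsum_le_tsum (fun m => ?_) ?_ hsum
          · exact hf.sum_inner_products_le (T (b m))
          · exact Summable.of_nonneg_of_le (fun m => Finset.sum_nonneg fun n _ => by positivity)
              (fun m => hf.sum_inner_products_le (T (b m))) hsum
  have hsummable : Summable (fun n => ‖adjoint T (f n)‖ ^ 2) :=
    summable_of_sum_le (fun n => by positivity) key
  exact ⟨hsummable, tsum_le_of_sum_le' (tsum_nonneg fun m => by positivity) key⟩

lemma exists_nat_hilbertBasis' [TopologicalSpace.SeparableSpace H]
    (g : ℕ → H) (hg : Orthonormal ℂ g) : Nonempty (HilbertBasis ℕ ℂ H) := by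
  obtain ⟨w, bw, hbw⟩ := exists_hilbertBasis ℂ H
  have hwo : Orthonormal ℂ ((↑) : w → H) := hbw ▸ bw.orthonormal
  have hcount : Countable w := by
    apply Pairwise.countable_of_isOpen_disjoint
      (s := fun i : w => Metric.ball (i : H) (1/2))
    · intro i j hij
      apply Metric.ball_disjoint_ball
      rw [dist_eq_norm]
      have h2 : ‖(i:H) - j‖ ^ 2 = 2 := by
        rw [@norm_sub_sq ℂ]
        have h1 : ‖(i:H)‖ = 1 := hwo.1 i
        have h1' : ‖(j:H)‖ = 1 := hwo.1 j
        have h0 : ⟪(i:H), (j:H)⟫_ℂ = 0 := hwo.2 hij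
        rw [h0, h1, h1']; norm_num
      nlinarith [norm_nonneg ((i:H) - j)]
    · exact fun i => Metric.isOpen_ball
    · exact fun i => Metric.nonempty_ball.2 (by norm_num)
  have hd : (Submodule.span ℂ w).topologicalClosure = ⊤ := by
    have hd := bw.dense_span
    rwa [hbw, Subtype.range_coe] at hd
  have hinf : Infinite w := by
    rw [Set.infinite_coe_iff]
    intro hfin
    have hsp : FiniteDimensional ℂ (Submodule.span ℂ w) :=
      FiniteDimensional.span_of_finite ℂ hfin
    have hclosed := (Submodule.span ℂ w).closed_of_finiteDimensional
    have htop : Submodule.span ℂ w = ⊤ := by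
      rwa [IsClosed.submodule_topologicalClosure_eq hclosed] at hd
    rw [htop] at hsp
    have : FiniteDimensional ℂ H := Submodule.topEquiv.finiteDimensional
    exact Module.Finite.not_linearIndependent_of_infinite g hg.linearIndependent
  have e : ℕ ≃ w := ((nonempty_denumerable w).some.eqv).symm
  refine ⟨HilbertBasis.mk (v := fun n => ((e n : w) : H))
    (hwo.comp e e.injective) ?_⟩
  have hr : Set.range (fun n => ((e n : w) : H)) = w := by
    rw [show (fun n => ((e n : w) : H)) = (Subtype.val ∘ e) from rfl, Set.range_comp,
      Equiv.range_eq_univ, Set.image_univ, Subtype.range_coe]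
  rw [hr, hd]

lemma unitary_orthonormal_map {V : H →L[ℂ] H} (hV : V ∈ unitary (H →L[ℂ] H))
    {f : ℕ → H} (hf : Orthonormal ℂ f) : Orthonormal ℂ (fun n => V (f n)) := by
  rw [orthonormal_iff_ite] at hf ⊢
  intro i j
  rw [← hf i j]
  rw [← adjoint_inner_right, ← star_eq_adjoint, ← ContinuousLinearMap.mul_apply,
    (Unitary.mem_iff.mp hV).1, ContinuousLinearMap.one_apply]

end Aux

section Aux2

variable {H : Type*} [NormedAddCommGroup H] [InnerProductSpace ℂ H] [CompleteSpace H]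

lemma inner_adj_left' (A : H →L[ℂ] H) (x y : H) :
    ⟪x, A y⟫_ℂ = ⟪ContinuousLinearMap.adjoint A x, y⟫_ℂ := by
  rw [ContinuousLinearMap.adjoint_inner_left]

end Aux2


set_option maxHeartbeats 2000000 in
set_option synthInstance.maxHeartbeats 400000 in
/-- unitary channel approximation. If `R` is a set of unitaries whose
closure in the strong operator topology (relative to the unitary group) is the whole
unitary group, then for any density operator `ρ`, any unitary `U` and any `ε > 0`
there is `W ∈ R` with `‖U ρ U† − W ρ W†‖₁ < ε`. -/
theorem stmt_9 [TopologicalSpace.SeparableSpace H]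
    (R : Set (H →L[ℂ] H)) (hR : ∀ W ∈ R, W ∈ unitary (H →L[ℂ] H))
    (hdense : ∀ U ∈ unitary (H →L[ℂ] H), ∀ s : Finset H, ∀ ε > (0 : ℝ),
      ∃ W ∈ R, ∀ x ∈ s, ‖U x - W x‖ < ε)
    (ρ : H →L[ℂ] H) (hρ : IsDensityOperator ρ)
    (U : H →L[ℂ] H) (hU : U ∈ unitary (H →L[ℂ] H)) :
    ∀ ε > (0 : ℝ), ∃ W ∈ R, traceNorm (U * ρ * star U - W * ρ * star W) < ε := by
  classical
  intro ε hε
  obtain ⟨hpos, htc, htr⟩ := hρ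
  by_cases hON : ∃ g : ℕ → H, Orthonormal ℂ g
  case neg =>
    obtain ⟨W, hWR, -⟩ := hdense 1 (one_mem _) (∅ : Finset H) 1 one_pos
    refine ⟨W, hWR, ?_⟩
    have h0 : traceNorm (U * ρ * star U - W * ρ * star W) ≤ ε / 2 := by
      unfold traceNorm
      exact Real.iSup_le (fun p => absurd ⟨p.1.1, p.2.1⟩ hON) (by positivity)
    linarith
  case pos =>
    obtain ⟨g₀, hg₀⟩ := hON
    obtain ⟨b⟩ := exists_nat_hilbertBasis' g₀ hg₀
    have hρ0 : (0 : H →L[ℂ] H) ≤ ρ := (ContinuousLinearMap.nonneg_iff_isPositive ρ).2 hpos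
    set S : H →L[ℂ] H := CFC.sqrt ρ with hSdef
    have hS0 : (0 : H →L[ℂ] H) ≤ S := CFC.sqrt_nonneg (a := ρ)
    have hSsa : IsSelfAdjoint S := .of_nonneg hS0
    have hSadj : ContinuousLinearMap.adjoint S = S := by
      rw [← ContinuousLinearMap.star_eq_adjoint]; exact hSsa
    have hSS : S * S = ρ := CFC.sqrt_mul_sqrt_self ρ hρ0
    have hSx : ∀ x : H, ‖S x‖ ^ 2 = (⟪x, ρ x⟫_ℂ).re := by
      intro x
      have hinner : ⟪S x, S x⟫_ℂ = ⟪x, ρ x⟫_ℂ :=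
        calc ⟪S x, S x⟫_ℂ = ⟪ContinuousLinearMap.adjoint S x, S x⟫_ℂ := by rw [hSadj]
        _ = ⟪x, S (S x)⟫_ℂ := ContinuousLinearMap.adjoint_inner_left _ _ _
        _ = ⟪x, ρ x⟫_ℂ := by rw [← ContinuousLinearMap.mul_apply, hSS]
      rw [← inner_self_eq_norm_sq (𝕜 := ℂ), hinner]
      rfl
    -- summability along the basis and total mass one
    have hbsum : Summable (fun m => ‖S (b m)‖ ^ 2) := by
      refine Summable.of_nonneg_of_le (fun m => by positivity) (fun m => ?_)
        (htc ⇑b ⇑b b.orthonormal b.orthonormal)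
      rw [hSx]
      exact Complex.re_le_norm _
    have hbtr : ∑' m, ‖S (b m)‖ ^ 2 = 1 := by
      have hsc : Summable (fun m => ⟪b m, ρ (b m)⟫_ℂ) :=
        (htc ⇑b ⇑b b.orthonormal b.orthonormal).of_norm
      have h2 := (hsc.hasSum.mapL Complex.reCLM).tsum_eq
      simp only [Complex.reCLM_apply] at h2
      have h3 : (∑' m, ⟪b m, ρ (b m)⟫_ℂ) = 1 := htr b
      simp_rw [hSx]
      rw [h2, h3, Complex.one_re]
    have keyON : ∀ f : ℕ → H, Orthonormal ℂ f →
        Summable (fun n => ‖S (f n)‖ ^ 2) ∧ ∑' n, ‖S (f n)‖ ^ 2 ≤ 1 := by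
      intro f hf
      have h := hs_bound' S b hf hbsum
      rw [hSadj] at h
      exact ⟨h.1, h.2.trans (le_of_eq hbtr)⟩
    -- choose the cutoff N
    have htail : ∃ N : ℕ, ∑' k, ‖S (b (k + N))‖ ^ 2 < ε ^ 2 / 128 := by
      have hpart := hbsum.hasSum.tendsto_sum_nat
      have hev : ∀ᶠ N in Filter.atTop,
          (∑' m, ‖S (b m)‖ ^ 2) - ε ^ 2 / 128 < ∑ i ∈ Finset.range N, ‖S (b i)‖ ^ 2 :=
        hpart.eventually (eventually_gt_nhds (by nlinarith))
      obtain ⟨N, hN⟩ := hev.exists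
      refine ⟨N, ?_⟩
      have hsplit := hbsum.sum_add_tsum_nat_add N
      linarith
    obtain ⟨N, hN⟩ := htail
    set δ : ℝ := ε / (8 * (N + 1)) with hδdef
    have hδpos : 0 < δ := by positivity
    obtain ⟨W, hWR, hWcl⟩ := hdense U hU ((Finset.range N).image (fun m => S (b m))) δ hδpos
    have hWU : W ∈ unitary (H →L[ℂ] H) := hR W hWR
    set T : H →L[ℂ] H := (U - W) * S with hTdef
    have hTapp : ∀ x : H, T x = U (S x) - W (S x) := fun x => by
      rw [hTdef, ContinuousLinearMap.mul_apply, ContinuousLinearMap.sub_apply]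
    have hTb2 : ∀ m : ℕ, ‖T (b m)‖ ^ 2 ≤ 4 * ‖S (b m)‖ ^ 2 := by
      intro m
      have h1 : ‖T (b m)‖ ≤ 2 * ‖S (b m)‖ := by
        rw [hTapp]
        calc ‖U (S (b m)) - W (S (b m))‖ ≤ ‖U (S (b m))‖ + ‖W (S (b m))‖ := norm_sub_le _ _
          _ = 2 * ‖S (b m)‖ := by
              rw [ContinuousLinearMap.norm_map_of_mem_unitary hU,
                ContinuousLinearMap.norm_map_of_mem_unitary hWU]; ring
      nlinarith [norm_nonneg (T (b m)), norm_nonneg (S (b m))]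
    have hTsum : Summable (fun m => ‖T (b m)‖ ^ 2) :=
      Summable.of_nonneg_of_le (fun m => by positivity) hTb2 (hbsum.mul_left 4)
    have hTbound : ∑' m, ‖T (b m)‖ ^ 2 ≤ ε ^ 2 / 16 := by
      rw [← hTsum.sum_add_tsum_nat_add N]
      have h1 : ∑ i ∈ Finset.range N, ‖T (b i)‖ ^ 2 ≤ N * δ ^ 2 := by
        calc ∑ i ∈ Finset.range N, ‖T (b i)‖ ^ 2 ≤ ∑ _i ∈ Finset.range N, δ ^ 2 := by
              refine Finset.sum_le_sum fun i hi => ?_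
              have hmem : S (b i) ∈ (Finset.range N).image (fun m => S (b m)) :=
                Finset.mem_image_of_mem _ hi
              have hcl := hWcl (S (b i)) hmem
              have heq : ‖T (b i)‖ = ‖U (S (b i)) - W (S (b i))‖ := by rw [hTapp]
              nlinarith [norm_nonneg (T (b i))]
          _ = N * δ ^ 2 := by rw [Finset.sum_const, Finset.card_range, nsmul_eq_mul]
      have hshift : Summable (fun k => 4 * ‖S (b (k + N))‖ ^ 2) :=
        ((summable_nat_add_iff N).2 hbsum).mul_left 4
      have h2 : ∑' k, ‖T (b (k + N))‖ ^ 2 ≤ 4 * (ε ^ 2 / 128) := by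
        calc ∑' k, ‖T (b (k + N))‖ ^ 2 ≤ ∑' k, 4 * ‖S (b (k + N))‖ ^ 2 :=
              Summable.tsum_le_tsum (fun k => hTb2 _) ((summable_nat_add_iff N).2 hTsum) hshift
          _ = 4 * ∑' k, ‖S (b (k + N))‖ ^ 2 := tsum_mul_left
          _ ≤ 4 * (ε ^ 2 / 128) := by nlinarith
      have hNδ : (N : ℝ) * δ ^ 2 ≤ ε ^ 2 / 64 := by
        have hδsq : δ ^ 2 = ε ^ 2 / (64 * ((N : ℝ) + 1) ^ 2) := by
          rw [hδdef]; field_simp; ring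
        have hNle : (N : ℝ) ≤ ((N : ℝ) + 1) ^ 2 := by nlinarith [(by positivity : (0:ℝ) ≤ (N:ℝ))]
        calc (N : ℝ) * δ ^ 2 = ((N : ℝ) * ε ^ 2) / (64 * ((N : ℝ) + 1) ^ 2) := by
              rw [hδsq]; ring
          _ ≤ ε ^ 2 / 64 := by
              rw [div_le_div_iff₀ (by positivity) (by norm_num)]
              nlinarith [mul_nonneg (sq_nonneg ε) (sub_nonneg.mpr hNle)]
      exact le_trans (add_le_add (h1.trans hNδ) h2) (by nlinarith [sq_nonneg ε])
    refine ⟨W, hWR, ?_⟩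
    -- adjoint of T
    have hTadj : ContinuousLinearMap.adjoint T = S * (star U - star W) := by
      rw [← ContinuousLinearMap.star_eq_adjoint, hTdef, star_mul, star_sub, hSsa.star_eq]
    have hmain : ∀ p : {p : (ℕ → H) × (ℕ → H) // Orthonormal ℂ p.1 ∧ Orthonormal ℂ p.2},
        ∑' n, ‖⟪(p : (ℕ → H) × (ℕ → H)).2 n,
          (U * ρ * star U - W * ρ * star W) ((p : (ℕ → H) × (ℕ → H)).1 n)⟫_ℂ‖ ≤ ε / 2 := by
      rintro ⟨⟨e, f⟩, he, hf⟩
      simp only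
      have hfa := hs_bound' T b hf hTsum
      have heb := hs_bound' T b he hTsum
      have hONe' : Orthonormal ℂ (fun n => (star U) (e n)) :=
        unitary_orthonormal_map (Unitary.star_mem hU) he
      have hONf' : Orthonormal ℂ (fun n => (star W) (f n)) :=
        unitary_orthonormal_map (Unitary.star_mem hWU) hf
      have hb1 := keyON _ hONe'
      have ha2 := keyON _ hONf'
      have hpt : ∀ n, ‖⟪f n, (U * ρ * star U - W * ρ * star W) (e n)⟫_ℂ‖ ≤
          ‖ContinuousLinearMap.adjoint T (f n)‖ * ‖S ((star U) (e n))‖ +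
            ‖S ((star W) (f n))‖ * ‖ContinuousLinearMap.adjoint T (e n)‖ := by
        intro n
        have hAeq : U * ρ * star U - W * ρ * star W
            = (U - W) * ρ * star U + W * ρ * (star U - star W) := by noncomm_ring
        rw [hAeq, ContinuousLinearMap.add_apply, inner_add_right]
        refine (norm_add_le _ _).trans (add_le_add ?_ ?_)
        · have e1 : ((U - W) * ρ * star U) (e n) = T (S ((star U) (e n))) := by
            rw [← hSS, hTdef]; rfl
          rw [e1, inner_adj_left' T]
          exact norm_inner_le_norm _ _
        · have e2 : (W * ρ * (star U - star W)) (e n) =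
              W (S (ContinuousLinearMap.adjoint T (e n))) := by
            rw [hTadj, ← hSS]; rfl
          rw [e2, inner_adj_left' W, inner_adj_left' S, hSadj,
            ← ContinuousLinearMap.star_eq_adjoint W]
          exact norm_inner_le_norm _ _
      have hs1 : Summable (fun n => ‖ContinuousLinearMap.adjoint T (f n)‖ * ‖S ((star U) (e n))‖) :=
        summable_mul_of_sq' hfa.1 hb1.1
      have hs2 : Summable (fun n => ‖S ((star W) (f n))‖ * ‖ContinuousLinearMap.adjoint T (e n)‖) :=
        summable_mul_of_sq' ha2.1 heb.1
      have hLHS : Summable (fun n => ‖⟪f n, (U * ρ * star U - W * ρ * star W) (e n)⟫_ℂ‖) :=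
        Summable.of_nonneg_of_le (fun n => norm_nonneg _) hpt (hs1.add hs2)
      have hsq : Real.sqrt (ε ^ 2 / 16) = ε / 4 := by
        rw [show ε ^ 2 / 16 = (ε / 4) ^ 2 by ring, Real.sqrt_sq (by positivity)]
      have hA1 : Real.sqrt (∑' n, ‖ContinuousLinearMap.adjoint T (f n)‖ ^ 2) ≤ ε / 4 := by
        rw [← hsq]; exact Real.sqrt_le_sqrt (hfa.2.trans hTbound)
      have hA2 : Real.sqrt (∑' n, ‖ContinuousLinearMap.adjoint T (e n)‖ ^ 2) ≤ ε / 4 := by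
        rw [← hsq]; exact Real.sqrt_le_sqrt (heb.2.trans hTbound)
      have hB1 : Real.sqrt (∑' n, ‖S ((star U) (e n))‖ ^ 2) ≤ 1 := Real.sqrt_le_one.mpr hb1.2
      have hB2 : Real.sqrt (∑' n, ‖S ((star W) (f n))‖ ^ 2) ≤ 1 := Real.sqrt_le_one.mpr ha2.2
      calc ∑' n, ‖⟪f n, (U * ρ * star U - W * ρ * star W) (e n)⟫_ℂ‖
          ≤ ∑' n, (‖ContinuousLinearMap.adjoint T (f n)‖ * ‖S ((star U) (e n))‖ +
              ‖S ((star W) (f n))‖ * ‖ContinuousLinearMap.adjoint T (e n)‖) :=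
            Summable.tsum_le_tsum hpt hLHS (hs1.add hs2)
        _ = (∑' n, ‖ContinuousLinearMap.adjoint T (f n)‖ * ‖S ((star U) (e n))‖) +
              ∑' n, ‖S ((star W) (f n))‖ * ‖ContinuousLinearMap.adjoint T (e n)‖ :=
            Summable.tsum_add hs1 hs2
        _ ≤ Real.sqrt (∑' n, ‖ContinuousLinearMap.adjoint T (f n)‖ ^ 2) *
              Real.sqrt (∑' n, ‖S ((star U) (e n))‖ ^ 2) +
            Real.sqrt (∑' n, ‖S ((star W) (f n))‖ ^ 2) *
              Real.sqrt (∑' n, ‖ContinuousLinearMap.adjoint T (e n)‖ ^ 2) :=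
            add_le_add (tsum_cs' (fun n => norm_nonneg _) (fun n => norm_nonneg _) hfa.1 hb1.1)
              (tsum_cs' (fun n => norm_nonneg _) (fun n => norm_nonneg _) ha2.1 heb.1)
        _ ≤ (ε / 4) * 1 + 1 * (ε / 4) := by
            refine add_le_add (mul_le_mul hA1 hB1 (Real.sqrt_nonneg _) (by positivity))
              (mul_le_mul hB2 hA2 (Real.sqrt_nonneg _) (by norm_num))
        _ = ε / 2 := by ring
    have hfin : traceNorm (U * ρ * star U - W * ρ * star W) ≤ ε / 2 := by
      unfold traceNorm
      exact Real.iSup_le hmain (by positivity)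
    linarith
end
end

section
/- Let H be an infinite-dimensional separable complex Hilbert space, C a trace-class operator and T a compact operator on H, and let (e_n)_{n∈ℕ} be an orthonormal basis of H with Π_k := Σ_{j=1}^k ⟨e_j, ·⟩e_j the orthogonal projection onto span{e₁, …, e_k}. Then the closures of the C-numerical ranges of the compressions Π_k T Π_k converge in the Hausdorff metric on nonempty compact subsets of ℂ to the closure of the C-numerical range of T: lim_{k→∞} cl(W_C(Π_k T Π_k)) = cl(W_C(T)). -/
/- Common definitions: trace class, trace norm, majorization, Lindblad
superoperators, C-numerical range, etc. -/

noncomputable section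

open scoped InnerProductSpace
open ContinuousLinearMap Filter

variable {H : Type*} [NormedAddCommGroup H] [InnerProductSpace ℂ H] [CompleteSpace H]

/-! ### Auxiliary lemmas for statement 14 -/

section Aux14

open ContinuousLinearMap

/-- Any selfadjoint contraction is the average of a unitary and its star. -/
lemma aux_avg_unitary [Nontrivial H] (S : H →L[ℂ] H) (hS : IsSelfAdjoint S) (hn : ‖S‖ ≤ 1) :
    ∃ U ∈ unitary (H →L[ℂ] H), S = (1/2 : ℂ) • (U + star U) := by
  have hnormal : IsStarNormal S := hS.isStarNormal
  set f : ℂ → ℂ := fun z => z + Complex.I * ((Real.sqrt (1 - z.re ^ 2) : ℝ) : ℂ) with hfdef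
  have hcont : Continuous f := by
    apply Continuous.add continuous_id
    exact continuous_const.mul (Complex.continuous_ofReal.comp
      (Real.continuous_sqrt.comp (by continuity)))
  have hcontstar : Continuous (fun z => star (f z)) := continuous_star.comp hcont
  have hspec : ∀ z ∈ spectrum ℂ S, z = (z.re : ℂ) ∧ (Real.sqrt (1 - z.re ^ 2))^2 = 1 - z.re^2 := by
    intro z hz
    have h1 : z = (z.re : ℂ) := hS.mem_spectrum_eq_re hz
    have h2 : ‖z‖ ≤ ‖S‖ := by
      simpa [Metric.mem_closedBall] using spectrum.subset_closedBall_norm S hz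
    have h3 : |z.re| ≤ 1 := by
      have : |z.re| ≤ ‖z‖ := by simpa using Complex.abs_re_le_norm z
      linarith
    have h4 : z.re ^ 2 ≤ 1 := by nlinarith [abs_nonneg z.re, sq_abs z.re]
    exact ⟨h1, Real.sq_sqrt (by linarith)⟩
  refine ⟨cfc f S, ?_, ?_⟩
  · rw [cfc_unitary_iff f S hnormal hcont.continuousOn]
    intro x hx
    obtain ⟨h1, hs⟩ := hspec x hx
    have h : ((Real.sqrt (1 - x.re ^ 2) : ℝ):ℂ)^2 = 1 - (x.re:ℂ)^2 := by norm_cast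
    rw [h1]
    simp only [hfdef, Complex.ofReal_re, star_add, star_mul', Complex.star_def,
      Complex.conj_I, Complex.conj_ofReal]
    linear_combination h - (((Real.sqrt (1 - x.re ^ 2) : ℝ):ℂ)^2) * Complex.I_sq
  · have h1 : star (cfc f S) = cfc (fun z => star (f z)) S := (cfc_star f S).symm
    rw [h1, ← cfc_add S f _ hcont.continuousOn hcontstar.continuousOn,
      ← cfc_smul (1/2 : ℂ) _ S (by exact (hcont.add hcontstar).continuousOn)]
    have hid : S = cfc (fun z : ℂ => z) S := (cfc_id' ℂ S hnormal).symm
    nth_rewrite 1 [hid]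
    apply cfc_congr
    intro x hx
    obtain ⟨h1, hs⟩ := hspec x hx
    simp only [hfdef, smul_eq_mul, star_add, star_mul', Complex.star_def, Complex.conj_I,
      Complex.conj_ofReal]
    have hconj : (starRingEnd ℂ) x = x := by rw [h1]; exact Complex.conj_ofReal _
    rw [hconj]
    ring

/-- A unitary maps an orthonormal family to an orthonormal family. -/
lemma aux_orthonormal_unitary (b : HilbertBasis ℕ ℂ H) {U : H →L[ℂ] H}
    (hU : U ∈ unitary (H →L[ℂ] H)) : Orthonormal ℂ (fun n => U (b n)) := by
  have hsm : star U * U = 1 := (Unitary.mem_iff.mp hU).1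
  have huu : ∀ y : H, ContinuousLinearMap.adjoint U (U y) = y := by
    intro y
    have h : ContinuousLinearMap.adjoint U (U y) = (star U * U) y := by
      rw [ContinuousLinearMap.star_eq_adjoint]; rfl
    rw [h, hsm]; rfl
  have key : ∀ x y : H, ⟪U x, U y⟫_ℂ = ⟪x, y⟫_ℂ := fun x y => by
    rw [← ContinuousLinearMap.adjoint_inner_right, huu]
  rw [orthonormal_iff_ite]
  intro i j
  rw [key]
  exact orthonormal_iff_ite.mp b.orthonormal i j

/-- Summability of the diagonal matrix entries of `C ∘ U` for `U` unitary. -/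
lemma aux_summable_unitary (b : HilbertBasis ℕ ℂ H) (C : H →L[ℂ] H) (hC : IsTraceClass C)
    {U : H →L[ℂ] H} (hU : U ∈ unitary (H →L[ℂ] H)) :
    Summable (fun n => ‖⟪b n, C (U (b n))⟫_ℂ‖) :=
  hC (fun n => U (b n)) (fun n => b n) (aux_orthonormal_unitary b hU) b.orthonormal

/-- Summability of the diagonal matrix entries of `C ∘ S` for `S` a selfadjoint contraction. -/
lemma aux_summable_sa [Nontrivial H] (b : HilbertBasis ℕ ℂ H) (C : H →L[ℂ] H) (hC : IsTraceClass C)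
    {S : H →L[ℂ] H} (hS : IsSelfAdjoint S) (hn : ‖S‖ ≤ 1) :
    Summable (fun n => ⟪b n, C (S (b n))⟫_ℂ) := by
  obtain ⟨U, hU, hrep⟩ := aux_avg_unitary S hS hn
  have h1 : Summable (fun n => ⟪b n, C (U (b n))⟫_ℂ) :=
    (aux_summable_unitary b C hC hU).of_norm
  have h2 : Summable (fun n => ⟪b n, C (star U (b n))⟫_ℂ) :=
    (aux_summable_unitary b C hC (Unitary.star_mem hU)).of_norm
  have hsum := ((h1.add h2).mul_left ((1:ℂ)/2))
  apply hsum.congr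
  intro n
  rw [hrep]
  simp only [ContinuousLinearMap.smul_apply, ContinuousLinearMap.add_apply, map_smul, map_add,
    inner_smul_right, inner_add_right, smul_eq_mul]

/-- Summability of the diagonal matrix entries of `C ∘ X` for arbitrary bounded `X`. -/
lemma aux_summable [Nontrivial H] (b : HilbertBasis ℕ ℂ H) (C : H →L[ℂ] H) (hC : IsTraceClass C)
    (X : H →L[ℂ] H) : Summable (fun n => ⟪b n, C (X (b n))⟫_ℂ) := by
  set r : ℝ := ‖X‖ + 1 with hr
  have hrpos : (0:ℝ) < r := by positivity
  have hrne : ((r:ℝ) : ℂ) ≠ 0 := by exact_mod_cast hrpos.ne'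
  set Y : H →L[ℂ] H := ((r : ℂ))⁻¹ • X with hY
  have hYnorm : ‖Y‖ ≤ 1 := by
    rw [hY, norm_smul]
    have h : ‖((r:ℝ):ℂ)⁻¹‖ = r⁻¹ := by
      rw [norm_inv, Complex.norm_real, Real.norm_eq_abs, abs_of_pos hrpos]
    rw [h, inv_mul_le_iff₀ hrpos, mul_one, hr]
    linarith
  set S₁ : H →L[ℂ] H := (1/2 : ℂ) • (Y + star Y) with hS1
  set S₂ : H →L[ℂ] H := (Complex.I/2) • (star Y - Y) with hS2
  have hS1sa : IsSelfAdjoint S₁ := by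
    rw [IsSelfAdjoint, hS1, star_smul, star_add, star_star]
    have h12 : star (1/2 : ℂ) = (1/2 : ℂ) := by
      rw [star_div₀, star_one]; norm_num
    rw [h12, add_comm]
  have hS2sa : IsSelfAdjoint S₂ := by
    rw [IsSelfAdjoint, hS2, star_smul, star_sub, star_star]
    have hI2 : star (Complex.I/2 : ℂ) = -(Complex.I/2 : ℂ) := by
      have h2 : star (2 : ℂ) = 2 := by norm_num
      rw [star_div₀, h2, Complex.star_def, Complex.conj_I, neg_div]
    rw [hI2, neg_smul, ← smul_neg, neg_sub]
  have hS1n : ‖S₁‖ ≤ 1 := by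
    rw [hS1]
    calc ‖(1/2 : ℂ) • (Y + star Y)‖ ≤ ‖(1/2 : ℂ)‖ * (‖Y‖ + ‖star Y‖) := by
          rw [norm_smul]; gcongr; exact norm_add_le _ _
    _ ≤ (1/2) * (1 + 1) := by
          rw [norm_star]
          have h : ‖(1/2 : ℂ)‖ = 1/2 := by norm_num
          rw [h]; gcongr <;> norm_num
    _ = 1 := by norm_num
  have hS2n : ‖S₂‖ ≤ 1 := by
    rw [hS2]
    calc ‖(Complex.I/2 : ℂ) • (star Y - Y)‖ ≤ ‖(Complex.I/2 : ℂ)‖ * (‖star Y‖ + ‖Y‖) := by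
          rw [norm_smul]; gcongr; exact norm_sub_le _ _
    _ ≤ (1/2) * (1 + 1) := by
          rw [norm_star]
          have h : ‖(Complex.I/2 : ℂ)‖ = 1/2 := by
            rw [norm_div, Complex.norm_I]; norm_num
          rw [h]; gcongr <;> norm_num
    _ = 1 := by norm_num
  have hXrep : X = ((r:ℂ)) • S₁ + ((r:ℂ) * Complex.I) • S₂ := by
    have hZ : ((r:ℂ)) • Y = X := by rw [hY, smul_smul, mul_inv_cancel₀ hrne, one_smul]
    rw [hS1, hS2, ← hZ]
    match_scalars
    · linear_combination (((r:ℝ):ℂ)*(((r:ℝ):ℂ))⁻¹/2) * Complex.I_sq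
    · linear_combination (-((r:ℝ):ℂ)/2) * Complex.I_sq
  have hs1 := aux_summable_sa b C hC hS1sa hS1n
  have hs2 := aux_summable_sa b C hC hS2sa hS2n
  have hsum := (hs1.mul_left ((r:ℂ))).add (hs2.mul_left ((r:ℂ) * Complex.I))
  apply hsum.congr
  intro n
  conv_rhs => rw [hXrep]
  simp only [ContinuousLinearMap.smul_apply, ContinuousLinearMap.add_apply, map_smul, map_add,
    inner_smul_right, inner_add_right, smul_eq_mul]

/-- The trace against a trace class operator is a bounded functional on `B(H)`. -/
lemma aux_trace_bound [Nontrivial H] (b : HilbertBasis ℕ ℂ H) (C : H →L[ℂ] H) (hC : IsTraceClass C) :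
    ∃ K : ℝ, 0 ≤ K ∧ ∀ X : H →L[ℂ] H, ‖∑' n, ⟪b n, C (X (b n))⟫_ℂ‖ ≤ K * ‖X‖ := by
  set ψ : ℕ → (H →L[ℂ] H) →L[ℂ] ℂ := fun n =>
    (innerSL ℂ (b n)).comp (C.comp (ContinuousLinearMap.apply ℂ H (b n))) with hψ
  set φ : ℕ → (H →L[ℂ] H) →L[ℂ] ℂ := fun N => ∑ n ∈ Finset.range N, ψ n with hφdef
  have hφ : ∀ N (X : H →L[ℂ] H), φ N X = ∑ n ∈ Finset.range N, ⟪b n, C (X (b n))⟫_ℂ := by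
    intro N X
    rw [hφdef]
    rw [ContinuousLinearMap.sum_apply]
    apply Finset.sum_congr rfl
    intro n _
    simp [hψ]
  have hpt : ∀ X : H →L[ℂ] H,
      Filter.Tendsto (fun N => φ N X) atTop (nhds (∑' n, ⟪b n, C (X (b n))⟫_ℂ)) := by
    intro X
    have h := (aux_summable b C hC X).hasSum.tendsto_sum_nat
    refine h.congr ?_
    intro N
    exact (hφ N X).symm
  have hbdd : ∀ X : H →L[ℂ] H, ∃ c : ℝ, ∀ N, ‖φ N X‖ ≤ c := by
    intro X
    obtain ⟨c, hc⟩ := (hpt X).norm.bddAbove_range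
    exact ⟨c, fun N => hc (Set.mem_range_self N)⟩
  obtain ⟨K, hK⟩ := banach_steinhaus hbdd
  refine ⟨max K 0, le_max_right _ _, ?_⟩
  intro X
  apply le_of_tendsto (hpt X).norm
  filter_upwards with N
  calc ‖φ N X‖ ≤ ‖φ N‖ * ‖X‖ := (φ N).le_opNorm X
  _ ≤ max K 0 * ‖X‖ := by
      gcongr
      exact (hK N).trans (le_max_left _ _)

/-- Lipschitz estimate for the Hausdorff distance between closed C-numerical ranges. -/
lemma aux_hdist_le [Nontrivial H] (b : HilbertBasis ℕ ℂ H) (C : H →L[ℂ] H) (hC : IsTraceClass C)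
    {K : ℝ} (hK0 : 0 ≤ K)
    (hKb : ∀ X : H →L[ℂ] H, ‖∑' n, ⟪b n, C (X (b n))⟫_ℂ‖ ≤ K * ‖X‖)
    (A B : H →L[ℂ] H) :
    Metric.hausdorffDist (closure (CNumRange b C A)) (closure (CNumRange b C B))
      ≤ K * ‖A - B‖ := by
  have htr : ∀ X : H →L[ℂ] H, traceAlong b (C * X) = ∑' n, ⟪b n, C (X (b n))⟫_ℂ := by
    intro X
    exact tsum_congr fun n => by rw [ContinuousLinearMap.mul_apply]
  have key : ∀ (A' B' : H →L[ℂ] H) {U : H →L[ℂ] H}, U ∈ unitary (H →L[ℂ] H) →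
      dist (traceAlong b (C * (star U * A' * U))) (traceAlong b (C * (star U * B' * U)))
        ≤ K * ‖A' - B'‖ := by
    intro A' B' U hU
    rw [dist_eq_norm, htr, htr]
    have hsub : (∑' n, ⟪b n, C ((star U * A' * U) (b n))⟫_ℂ)
        - (∑' n, ⟪b n, C ((star U * B' * U) (b n))⟫_ℂ)
        = ∑' n, ⟪b n, C ((star U * (A' - B') * U) (b n))⟫_ℂ := by
      rw [← Summable.tsum_sub (aux_summable b C hC _) (aux_summable b C hC _)]
      apply tsum_congr
      intro n
      have hop : star U * (A' - B') * U = star U * A' * U - star U * B' * U := by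
        noncomm_ring
      rw [hop]
      simp only [ContinuousLinearMap.sub_apply, map_sub, inner_sub_right]
    rw [hsub]
    calc ‖∑' n, ⟪b n, C ((star U * (A' - B') * U) (b n))⟫_ℂ‖
        ≤ K * ‖star U * (A' - B') * U‖ := hKb _
    _ = K * ‖A' - B'‖ := by
        rw [CStarRing.norm_mul_mem_unitary _ hU, CStarRing.norm_mem_unitary_mul _ (Unitary.star_mem hU)]
  rw [Metric.hausdorffDist_closure]
  apply Metric.hausdorffDist_le_of_mem_dist (by positivity)
  · rintro z ⟨U, hU, rfl⟩
    exact ⟨traceAlong b (C * (star U * B * U)), ⟨U, hU, rfl⟩, key A B hU⟩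
  · rintro z ⟨U, hU, rfl⟩
    refine ⟨traceAlong b (C * (star U * A * U)), ⟨U, hU, rfl⟩, ?_⟩
    rw [dist_comm]
    exact key A B hU

/-- Pointwise formula for the finite-rank projections. -/
lemma aux_P_apply (e : HilbertBasis ℕ ℂ H) (k : ℕ) (x : H) :
    (∑ j ∈ Finset.range k, rankOne (e j) (e j)) x
      = ∑ j ∈ Finset.range k, ⟪e j, x⟫_ℂ • e j := by
  rw [ContinuousLinearMap.sum_apply]
  apply Finset.sum_congr rfl
  intro j _
  simp [rankOne]

/-- The projections are contractions. -/
lemma aux_P_norm_apply_le (e : HilbertBasis ℕ ℂ H) (k : ℕ) (x : H) :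
    ‖(∑ j ∈ Finset.range k, rankOne (e j) (e j)) x‖ ≤ ‖x‖ := by
  rw [aux_P_apply]
  set s : H := ∑ j ∈ Finset.range k, ⟪e j, x⟫_ℂ • e j with hs
  have h1 : ⟪s, s⟫_ℂ = ∑ j ∈ Finset.range k, ((‖⟪e j, x⟫_ℂ‖:ℝ):ℂ)^2 := by
    rw [hs, e.orthonormal.inner_sum (fun j => ⟪e j, x⟫_ℂ) (fun j => ⟪e j, x⟫_ℂ)]
    apply Finset.sum_congr rfl
    intro j _
    rw [RCLike.conj_mul]
    norm_cast
  have h2 : ⟪s, s⟫_ℂ = ((‖s‖:ℝ):ℂ)^2 := inner_self_eq_norm_sq_to_K s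
  have h3 : (‖s‖:ℝ)^2 = ∑ j ∈ Finset.range k, ‖⟪e j, x⟫_ℂ‖^2 := by
    have h := h2.symm.trans h1
    have h' : (((‖s‖:ℝ)^2 : ℝ) : ℂ) = ((∑ j ∈ Finset.range k, ‖⟪e j, x⟫_ℂ‖^2 : ℝ) : ℂ) := by
      push_cast
      exact h
    exact_mod_cast h'
  have h4 : ∑ j ∈ Finset.range k, ‖⟪e j, x⟫_ℂ‖^2 ≤ ‖x‖^2 :=
    e.orthonormal.sum_inner_products_le x
  nlinarith [norm_nonneg s, norm_nonneg x]

/-- Strong convergence of the projections to the identity. -/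
lemma aux_P_tendsto (e : HilbertBasis ℕ ℂ H) (x : H) :
    Filter.Tendsto (fun k => (∑ j ∈ Finset.range k, rankOne (e j) (e j)) x)
      atTop (nhds x) := by
  have h := (e.hasSum_repr x).tendsto_sum_nat
  refine h.congr ?_
  intro k
  rw [aux_P_apply]
  apply Finset.sum_congr rfl
  intro j _
  rw [e.repr_apply_apply]

/-- The projections are selfadjoint. -/
lemma aux_P_star (e : HilbertBasis ℕ ℂ H) (k : ℕ) :
    star (∑ j ∈ Finset.range k, rankOne (e j) (e j))
      = ∑ j ∈ Finset.range k, rankOne (e j) (e j) := by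
  rw [star_sum]
  apply Finset.sum_congr rfl
  intro j _
  rw [ContinuousLinearMap.star_eq_adjoint]
  symm
  rw [ContinuousLinearMap.eq_adjoint_iff]
  intro x y
  simp only [rankOne, ContinuousLinearMap.smulRight_apply, innerSL_apply_apply,
    inner_smul_left, inner_smul_right]
  rw [← inner_conj_symm x (e j)]
  ring

/-- Uniform convergence of `P k ∘ S` to `S` for compact `S`. -/
lemma aux_left_approx (e : HilbertBasis ℕ ℂ H) (S : H →L[ℂ] H)
    (hS : IsCompactOperator (⇑S)) :
    Filter.Tendsto (fun k => ‖(∑ j ∈ Finset.range k, rankOne (e j) (e j)) * S - S‖)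
      atTop (nhds 0) := by
  rw [NormedAddCommGroup.tendsto_nhds_zero]
  intro ε hε
  obtain ⟨Kc, hKc, hKV⟩ := hS
  rw [Metric.mem_nhds_iff] at hKV
  obtain ⟨r, hr, hball⟩ := hKV
  set δ : ℝ := ε * r / 12 with hδ
  have hδpos : 0 < δ := by positivity
  obtain ⟨t, htfin, htcov⟩ := Metric.totallyBounded_iff.mp hKc.totallyBounded δ hδpos
  have hev : ∀ᶠ k in atTop, ∀ y ∈ t,
      ‖(∑ j ∈ Finset.range k, rankOne (e j) (e j)) y - y‖ < δ := by
    rw [Filter.eventually_all_finite htfin]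
    intro y _
    have := (aux_P_tendsto e y).sub_const y
    rw [sub_self] at this
    have h2 := (NormedAddCommGroup.tendsto_nhds_zero).mp this δ hδpos
    exact h2
  filter_upwards [hev] with k hk
  have hbound : ∀ x : H, ‖((∑ j ∈ Finset.range k, rankOne (e j) (e j)) * S - S) x‖
      ≤ (ε / 2) * ‖x‖ := by
    intro x
    rcases eq_or_ne x 0 with rfl | hx
    · simp
    · have hxn : 0 < ‖x‖ := norm_pos_iff.mpr hx
      set c : ℝ := r / (2 * ‖x‖) with hc
      have hcpos : 0 < c := by positivity
      set x' : H := (c : ℂ) • x with hx'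
      have hx'n : ‖x'‖ = r / 2 := by
        rw [hx', norm_smul, Complex.norm_real, Real.norm_eq_abs, abs_of_pos hcpos, hc]
        field_simp
      have hx'ball : x' ∈ Metric.ball (0 : H) r := by
        rw [Metric.mem_ball, dist_zero_right, hx'n]
        linarith
      have hSx' : S x' ∈ Kc := hball hx'ball
      obtain ⟨y, hyt, hys⟩ : ∃ y ∈ t, S x' ∈ Metric.ball y δ := by
        have := htcov hSx'
        simpa using this
      have hdist : ‖S x' - y‖ < δ := by
        rw [Metric.mem_ball, dist_comm, dist_eq_norm] at hys
        rwa [norm_sub_rev]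
      set P : H →L[ℂ] H := ∑ j ∈ Finset.range k, rankOne (e j) (e j) with hP
      have hPy : ‖P y - y‖ < δ := hk y hyt
      have hmain : ‖P (S x') - S x'‖ < 3 * δ := by
        have hdecomp : P (S x') - S x' = P (S x' - y) + (P y - y) + (y - S x') := by
          rw [map_sub]; abel
        rw [hdecomp]
        calc ‖P (S x' - y) + (P y - y) + (y - S x')‖
            ≤ ‖P (S x' - y)‖ + ‖P y - y‖ + ‖y - S x'‖ := norm_add₃_le
        _ < δ + δ + δ := by
            have hb1 : ‖P (S x' - y)‖ < δ := by
              have hb := aux_P_norm_apply_le e k (S x' - y)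
              rw [← hP] at hb
              exact hb.trans_lt hdist
            have hb3 : ‖y - S x'‖ < δ := by rwa [norm_sub_rev]
            exact add_lt_add (add_lt_add hb1 hPy) hb3
        _ = 3 * δ := by ring
      have hlin : (P * S - S) x = ((c:ℂ))⁻¹ • (P (S x') - S x') := by
        have hcne : ((c:ℝ):ℂ) ≠ 0 := by exact_mod_cast hcpos.ne'
        rw [hx']
        simp only [ContinuousLinearMap.sub_apply, ContinuousLinearMap.mul_apply,
          map_smul, smul_sub, smul_smul, inv_mul_cancel₀ hcne, one_smul]
      rw [hlin, norm_smul]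
      have hcinv : ‖((c:ℝ):ℂ)⁻¹‖ = c⁻¹ := by
        rw [norm_inv, Complex.norm_real, Real.norm_eq_abs, abs_of_pos hcpos]
      rw [hcinv]
      calc c⁻¹ * ‖P (S x') - S x'‖ ≤ c⁻¹ * (3 * δ) :=
            mul_le_mul_of_nonneg_left hmain.le (inv_nonneg.mpr hcpos.le)
      _ = (2 * ‖x‖ / r) * (3 * (ε * r / 12)) := by rw [hc, hδ]; field_simp
      _ = (ε / 2) * ‖x‖ := by field_simp; ring
  have hop : ‖(∑ j ∈ Finset.range k, rankOne (e j) (e j)) * S - S‖ ≤ ε / 2 :=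
    ContinuousLinearMap.opNorm_le_bound _ (by positivity) hbound
  rw [Real.norm_eq_abs, abs_of_nonneg (norm_nonneg _)]
  linarith

end Aux14

/-- convergence of the closed C-numerical ranges of the finite block
compressions `Π_k T Π_k` of a compact operator `T` to the closed C-numerical range of
`T`, in the Hausdorff metric on compact subsets of `ℂ`. -/
theorem stmt_14 (b : HilbertBasis ℕ ℂ H) (hinf : ¬ FiniteDimensional ℂ H)
    (C T : H →L[ℂ] H) (hC : IsTraceClass C) (hT : IsCompactOperator (⇑T))
    (e : HilbertBasis ℕ ℂ H) :
    Tendsto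
      (fun k => Metric.hausdorffDist
        (closure (CNumRange b C
          ((∑ j ∈ Finset.range k, rankOne (e j) (e j)) * T *
            (∑ j ∈ Finset.range k, rankOne (e j) (e j)))))
        (closure (CNumRange b C T)))
      atTop (nhds 0) := by
  classical
  haveI : Nontrivial H := ⟨⟨b 0, 0, b.orthonormal.ne_zero 0⟩⟩
  obtain ⟨K, hK0, hKb⟩ := aux_trace_bound b C hC
  set P : ℕ → (H →L[ℂ] H) := fun k => ∑ j ∈ Finset.range k, rankOne (e j) (e j) with hPdef
  have hPnorm : ∀ (k : ℕ) (Z : H →L[ℂ] H), ‖P k * Z‖ ≤ ‖Z‖ := by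
    intro k Z
    apply ContinuousLinearMap.opNorm_le_bound _ (norm_nonneg Z)
    intro x
    calc ‖(P k * Z) x‖ = ‖P k (Z x)‖ := by rw [ContinuousLinearMap.mul_apply]
    _ ≤ ‖Z x‖ := aux_P_norm_apply_le e k (Z x)
    _ ≤ ‖Z‖ * ‖x‖ := Z.le_opNorm x
  have hPop : ∀ k : ℕ, ‖P k‖ ≤ 1 := by
    intro k
    apply ContinuousLinearMap.opNorm_le_bound _ zero_le_one
    intro x
    rw [one_mul]
    exact aux_P_norm_apply_le e k x
  have hTT : IsCompactOperator (⇑(star T * T)) := by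
    have h := hT.clm_comp (star T)
    have hh : ⇑(star T * T) = ⇑(star T) ∘ ⇑T := rfl
    rw [hh]
    exact h
  have h1 := aux_left_approx e T hT
  have h2 := aux_left_approx e (star T * T) hTT
  have hTP : ∀ k : ℕ, ‖T * P k - T‖
      ≤ Real.sqrt (2 * ‖P k * (star T * T) - star T * T‖) := by
    intro k
    apply Real.le_sqrt_of_sq_le
    have hsq : ‖T * P k - T‖ ^ 2 = ‖star (T * P k - T) * (T * P k - T)‖ := by
      rw [CStarRing.norm_star_mul_self]
      ring
    have hstar : star (T * P k - T) = P k * star T - star T := by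
      rw [star_sub, star_mul, aux_P_star]
    have hprod : star (T * P k - T) * (T * P k - T)
        = (P k * (star T * T) - star T * T) * P k
          - (P k * (star T * T) - star T * T) := by
      rw [hstar]
      noncomm_ring
    rw [hsq, hprod]
    have hb : ‖(P k * (star T * T) - star T * T) * P k
        - (P k * (star T * T) - star T * T)‖
        ≤ 2 * ‖P k * (star T * T) - star T * T‖ := by
      calc ‖(P k * (star T * T) - star T * T) * P k
          - (P k * (star T * T) - star T * T)‖
          ≤ ‖(P k * (star T * T) - star T * T) * P k‖
            + ‖P k * (star T * T) - star T * T‖ := norm_sub_le _ _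
      _ ≤ ‖P k * (star T * T) - star T * T‖ * ‖P k‖
            + ‖P k * (star T * T) - star T * T‖ := by
          gcongr
          exact norm_mul_le _ _
      _ ≤ ‖P k * (star T * T) - star T * T‖ * 1
            + ‖P k * (star T * T) - star T * T‖ := by
          gcongr
          exact hPop k
      _ = 2 * ‖P k * (star T * T) - star T * T‖ := by ring
    exact hb
  have hTPtend : Tendsto (fun k => ‖T * P k - T‖) atTop (nhds 0) := by
    apply squeeze_zero (fun k => norm_nonneg _) hTP
    have h2' : Tendsto (fun k => 2 * ‖P k * (star T * T) - star T * T‖) atTop (nhds 0) := by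
      have := h2.const_mul (2:ℝ)
      simpa using this
    have hcomp := (Real.continuous_sqrt.tendsto 0).comp h2'
    simpa [Function.comp_def] using hcomp
  have hMle : ∀ k : ℕ, ‖P k * T * P k - T‖ ≤ ‖T * P k - T‖ + ‖P k * T - T‖ := by
    intro k
    have hdec : P k * T * P k - T = P k * (T * P k - T) + (P k * T - T) := by
      noncomm_ring
    rw [hdec]
    calc ‖P k * (T * P k - T) + (P k * T - T)‖
        ≤ ‖P k * (T * P k - T)‖ + ‖P k * T - T‖ := norm_add_le _ _
    _ ≤ ‖T * P k - T‖ + ‖P k * T - T‖ := by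
        gcongr
        exact hPnorm k _
  have hMtend : Tendsto (fun k => ‖P k * T * P k - T‖) atTop (nhds 0) := by
    apply squeeze_zero (fun k => norm_nonneg _) hMle
    have := hTPtend.add h1
    simpa using this
  apply squeeze_zero (fun k => Metric.hausdorffDist_nonneg)
    (fun k => aux_hdist_le b C hC hK0 hKb (P k * T * P k) T)
  have := hMtend.const_mul K
  simpa using this
end
end
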